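/- arXiv:2201.05704 — 3 statements merged into one kernel-verified Lean document; each statement's English description precedes it below -/
import Mathlib

section
/- (Moser's bound) The supremum of M over [-2,2] is at least 1/√8, i.e. sup_{x ∈ [-2,2]} M(x) ≥ 1/√8. -/
open Real MeasureTheory Set

/-!
`M` is the density of `U - T` for independent `T ∼ f` and `U ∼ g`. It is a probability density
bounded by `s = sup M`, and its variance is `Var T + Var U ≤ E T² + E U² = ∫_{-1}^{1} x² dx = 2/3`,
because `f + g = 1` on `[-1, 1]`. On the other hand a probability density bounded by `s` has
variance at least that of the uniform density of height `s`, namely `1 / (12 s²)`: compare it with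
the truncated parabola `s · max (c² - (x - m)²) 0` for `c = 1 / (2s)` (bathtub principle).
Hence `1 / (12 s²) ≤ 2/3`, i.e. `s ≥ 1 / √8`.
-/

lemma support_max_sq_sub_sq_subset {c : ℝ} (hc : 0 ≤ c) (m : ℝ) :
    Function.support (fun x => max (c ^ 2 - (x - m) ^ 2) 0) ⊆ Icc (m - c) (m + c) := by
  intro x hx
  have hpos : 0 < c ^ 2 - (x - m) ^ 2 := by
    by_contra! h
    exact hx (max_eq_right h)
  have := abs_lt_of_sq_lt_sq (a := x - m) (by linarith) hc
  constructor <;> linarith [abs_lt.1 this]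

lemma integrable_max_sq_sub_sq {c : ℝ} (hc : 0 ≤ c) (m : ℝ) :
    Integrable fun x => max (c ^ 2 - (x - m) ^ 2) 0 :=
  (integrableOn_iff_integrable_of_support_subset (support_max_sq_sub_sq_subset hc m)).1
    (by fun_prop : Continuous fun x => max (c ^ 2 - (x - m) ^ 2) 0).integrableOn_Icc

lemma integral_max_sq_sub_sq {c : ℝ} (hc : 0 ≤ c) (m : ℝ) :
    ∫ x, max (c ^ 2 - (x - m) ^ 2) 0 = 4 / 3 * c ^ 3 := by
  rw [integral_sub_right_eq_self (fun x => max (c ^ 2 - x ^ 2) 0) m,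
    ← setIntegral_eq_integral_of_forall_compl_eq_zero (s := Icc (-c) c),
    integral_Icc_eq_integral_Ioc, ← intervalIntegral.integral_of_le (by linarith)]
  · have hparab : ∀ x ∈ uIcc (-c) c, max (c ^ 2 - x ^ 2) 0 = c ^ 2 - x ^ 2 := by
      intro x hx
      rw [uIcc_of_le (by linarith)] at hx
      exact max_eq_left (by nlinarith [hx.1, hx.2])
    rw [intervalIntegral.integral_congr hparab, intervalIntegral.integral_sub (by simp)
      (by simp), integral_pow]
    simp only [intervalIntegral.integral_const, sub_neg_eq_add, smul_eq_mul, Nat.cast_ofNat]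
    ring
  · intro x hx
    by_contra h
    simpa [hx] using support_max_sq_sub_sq_subset hc 0 (a := x) (by simpa using h)

lemma sq_sub_mul_pow_three_le_integral_sq_sub_mul {p : ℝ → ℝ} {s c : ℝ} (m : ℝ)
    (hp0 : ∀ x, 0 ≤ p x) (hps : ∀ x, p x ≤ s) (hp1 : ∫ x, p x = 1)
    (hpm : Integrable fun x => (x - m) ^ 2 * p x) (hc : 0 ≤ c) :
    c ^ 2 - 4 / 3 * s * c ^ 3 ≤ ∫ x, (x - m) ^ 2 * p x := by
  have hp : Integrable p := .of_integral_ne_zero (by simp [hp1])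
  have hbathtub : ∀ x, c ^ 2 * p x - s * max (c ^ 2 - (x - m) ^ 2) 0 ≤ (x - m) ^ 2 * p x := by
    intro x
    rcases le_total (c ^ 2 - (x - m) ^ 2) 0 with h | h
    · rw [max_eq_right h]
      nlinarith [hp0 x]
    · rw [max_eq_left h]
      nlinarith [hps x]
  calc c ^ 2 - 4 / 3 * s * c ^ 3
      = ∫ x, (c ^ 2 * p x - s * max (c ^ 2 - (x - m) ^ 2) 0) := by
        rw [integral_sub (hp.const_mul _) ((integrable_max_sq_sub_sq hc m).const_mul _),
          integral_const_mul, integral_const_mul, hp1, integral_max_sq_sub_sq hc]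
        ring
    _ ≤ ∫ x, (x - m) ^ 2 * p x :=
        integral_mono ((hp.const_mul _).sub ((integrable_max_sq_sub_sq hc m).const_mul _)) hpm
          hbathtub

lemma one_le_mul_integral_sq_sub_mul {p : ℝ → ℝ} {s : ℝ} (m : ℝ)
    (hp0 : ∀ x, 0 ≤ p x) (hps : ∀ x, p x ≤ s) (hp1 : ∫ x, p x = 1)
    (hpm : Integrable fun x => (x - m) ^ 2 * p x) :
    1 ≤ 12 * s ^ 2 * ∫ x, (x - m) ^ 2 * p x := by
  have hs : 0 < s := by
    by_contra! hs
    have : p = 0 := funext fun x => le_antisymm ((hps x).trans hs) (hp0 x)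
    simp [this] at hp1
  -- `1 / (2s)` is the half-width of the uniform density of height `s`.
  have := sq_sub_mul_pow_three_le_integral_sq_sub_mul m hp0 hps hp1 hpm
    (by positivity : 0 ≤ 1 / (2 * s))
  have hval : (1 / (2 * s)) ^ 2 - 4 / 3 * s * (1 / (2 * s)) ^ 3 = 1 / (12 * s ^ 2) := by
    field_simp
    ring
  rw [hval, div_le_iff₀ (by positivity)] at this
  linarith

lemma MeasureTheory.Integrable.continuous_mul_of_hasCompactSupport {f w : ℝ → ℝ}
    (hf : Integrable f) (hfc : HasCompactSupport f) (hw : Continuous w) :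
    Integrable fun x => w x * f x := by
  refine (integrableOn_iff_integrable_of_support_subset ?_).1
    (hf.integrableOn.continuousOn_mul hw.continuousOn hfc)
  exact (Function.support_mul_subset_right _ _).trans (subset_tsupport f)

lemma integral_quadratic_mul {h : ℝ → ℝ} (hh : Integrable h) (hhc : HasCompactSupport h)
    (α β γ : ℝ) :
    ∫ x, (α + β * x + γ * x ^ 2) * h x
      = α * (∫ x, h x) + β * (∫ x, x * h x) + γ * ∫ x, x ^ 2 * h x := by
  have h1 := hh.continuous_mul_of_hasCompactSupport hhc continuous_id
  have h2 := hh.continuous_mul_of_hasCompactSupport hhc (continuous_pow 2)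
  simp only [id] at h1
  simp_rw [add_mul, mul_assoc]
  rw [integral_add (f := fun x => α * h x + β * (x * h x))
      ((hh.const_mul _).add (h1.const_mul _)) (h2.const_mul _),
    integral_add (hh.const_mul _) (h1.const_mul _), integral_const_mul, integral_const_mul,
    integral_const_mul]

lemma intervalIntegral_eq_integral_of_forall_notMem_Icc {f : ℝ → ℝ} {a b : ℝ} (hab : a ≤ b)
    (hf : ∀ x ∉ Icc a b, f x = 0) : ∫ x in a..b, f x = ∫ x, f x := by
  rw [intervalIntegral.integral_of_le hab, ← integral_Icc_eq_integral_Ioc,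
    setIntegral_eq_integral_of_forall_compl_eq_zero hf]

lemma integral_mul_indicator_one_sub {f w : ℝ → ℝ} {a b : ℝ} (hab : a ≤ b) (hf : Integrable f)
    (hf_supp : ∀ x ∉ Icc a b, f x = 0) (hw : Continuous w) :
    ∫ x, w x * (Icc a b).indicator (fun x => 1 - f x) x
      = (∫ x in a..b, w x) - ∫ x, w x * f x := by
  have hwf : Integrable fun x => w x * f x :=
    hf.continuous_mul_of_hasCompactSupport (.intro isCompact_Icc hf_supp) hw
  have hind : (fun x => w x * (Icc a b).indicator (fun x => 1 - f x) x)
      = (Icc a b).indicator fun x => w x - w x * f x := by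
    ext x
    by_cases hx : x ∈ Icc a b <;> simp [hx, mul_sub]
  rw [hind, integral_indicator measurableSet_Icc,
    integral_sub hw.integrableOn_Icc hwf.integrableOn,
    setIntegral_eq_integral_of_forall_compl_eq_zero (f := fun x => w x * f x)
      (fun x hx => by simp [hf_supp x hx]),
    integral_Icc_eq_integral_Ioc, intervalIntegral.integral_of_le hab]

noncomputable def crossCorrelation (f g : ℝ → ℝ) (x : ℝ) : ℝ := ∫ t, f t * g (x + t)

lemma crossCorrelation_nonneg {f g : ℝ → ℝ} (hf0 : ∀ x, 0 ≤ f x) (hg0 : ∀ x, 0 ≤ g x)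
    (x : ℝ) : 0 ≤ crossCorrelation f g x :=
  integral_nonneg fun t => mul_nonneg (hf0 t) (hg0 _)

lemma crossCorrelation_le_integral {f g : ℝ → ℝ} (hf : Integrable f) (hf0 : ∀ x, 0 ≤ f x)
    (hg0 : ∀ x, 0 ≤ g x) (hg1 : ∀ x, g x ≤ 1) (x : ℝ) :
    crossCorrelation f g x ≤ ∫ t, f t :=
  integral_mono_of_nonneg (.of_forall fun t => mul_nonneg (hf0 t) (hg0 _)) hf
    (.of_forall fun t => mul_le_of_le_one_right (hf0 t) (hg1 _))

lemma crossCorrelation_eq_zero {f g : ℝ → ℝ} (hf_supp : ∀ x ∉ Icc (-1 : ℝ) 1, f x = 0)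
    (hg_supp : ∀ x ∉ Icc (-1 : ℝ) 1, g x = 0) {x : ℝ} (hx : x ∉ Icc (-2 : ℝ) 2) :
    crossCorrelation f g x = 0 := by
  refine integral_eq_zero_of_ae (.of_forall fun t => ?_)
  by_cases ht : t ∈ Icc (-1 : ℝ) 1
  · have : x + t ∉ Icc (-1 : ℝ) 1 := fun hxt =>
      hx ⟨by linarith [ht.2, hxt.1], by linarith [ht.1, hxt.2]⟩
    simp [hg_supp _ this]
  · simp [hf_supp t ht]

lemma integrable_comp_sub_mul_mul {f g w : ℝ → ℝ} (hf : Integrable f) (hg : Integrable g)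
    (hfc : HasCompactSupport f) (hgc : HasCompactSupport g) (hw : Continuous w) :
    Integrable (fun p : ℝ × ℝ => w (p.2 - p.1) * (f p.1 * g p.2)) (volume.prod volume) := by
  obtain ⟨C, hC⟩ := (hfc.prod hgc).exists_bound_of_continuousOn
    (hw.comp (continuous_snd.sub continuous_fst)).continuousOn
  refine Integrable.mono' ((hf.mul_prod hg).norm.const_mul C)
    ((hw.comp (continuous_snd.sub continuous_fst)).aestronglyMeasurable.mul
      (hf.mul_prod hg).aestronglyMeasurable) (ae_of_all _ fun p => ?_)
  rw [norm_mul]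
  by_cases hp : p ∈ tsupport f ×ˢ tsupport g
  · exact mul_le_mul_of_nonneg_right (hC p hp) (norm_nonneg _)
  · have : f p.1 * g p.2 = 0 := by
      rcases not_and_or.1 hp with h | h
      · simp [image_eq_zero_of_notMem_tsupport h]
      · simp [image_eq_zero_of_notMem_tsupport h]
    simp [this]

lemma integrable_mul_mul_comp_add {f g w : ℝ → ℝ} (hf : Integrable f) (hg : Integrable g)
    (hfc : HasCompactSupport f) (hgc : HasCompactSupport g) (hw : Continuous w) :
    Integrable (fun p : ℝ × ℝ => w p.1 * (f p.2 * g (p.1 + p.2))) (volume.prod volume) := by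
  have := (measurePreserving_prod_add_swap volume volume).integrable_comp_of_integrable
    (integrable_comp_sub_mul_mul hf hg hfc hgc hw)
  convert this using 2 with p
  simp [add_comm p.1]

lemma integrable_mul_crossCorrelation {f g w : ℝ → ℝ} (hf : Integrable f)
    (hg : Integrable g) (hfc : HasCompactSupport f) (hgc : HasCompactSupport g)
    (hw : Continuous w) : Integrable fun x => w x * crossCorrelation f g x := by
  simpa only [crossCorrelation, integral_const_mul] using
    (integrable_mul_mul_comp_add hf hg hfc hgc hw).integral_prod_left

lemma integral_mul_crossCorrelation {f g w : ℝ → ℝ} (hf : Integrable f)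
    (hg : Integrable g) (hfc : HasCompactSupport f) (hgc : HasCompactSupport g)
    (hw : Continuous w) :
    ∫ x, w x * crossCorrelation f g x = ∫ t, f t * ∫ u, w (u - t) * g u := by
  simp_rw [crossCorrelation, ← integral_const_mul]
  rw [integral_integral_swap (integrable_mul_mul_comp_add hf hg hfc hgc hw)]
  congr 1 with t
  rw [← integral_add_right_eq_self (fun u => f t * (w (u - t) * g u)) t]
  simp only [add_sub_cancel_right]
  congr 1 with x
  ring

lemma integral_crossCorrelation {f g : ℝ → ℝ} (hf : Integrable f) (hg : Integrable g)
    (hfc : HasCompactSupport f) (hgc : HasCompactSupport g) :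
    ∫ x, crossCorrelation f g x = (∫ t, f t) * ∫ u, g u := by
  simpa [integral_mul_const] using
    integral_mul_crossCorrelation hf hg hfc hgc (continuous_const (y := (1 : ℝ)))

lemma integral_sq_sub_mul_crossCorrelation {f g : ℝ → ℝ} (hf : Integrable f)
    (hg : Integrable g) (hfc : HasCompactSupport f) (hgc : HasCompactSupport g)
    (hf1 : ∫ t, f t = 1) (hg1 : ∫ u, g u = 1) :
    ∫ x, (x - ((∫ u, u * g u) - ∫ t, t * f t)) ^ 2 * crossCorrelation f g x
      = ((∫ t, t ^ 2 * f t) - (∫ t, t * f t) ^ 2)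
        + ((∫ u, u ^ 2 * g u) - (∫ u, u * g u) ^ 2) := by
  set a := ∫ t, t * f t
  set b := ∫ t, t ^ 2 * f t
  set A := ∫ u, u * g u
  set B := ∫ u, u ^ 2 * g u
  rw [integral_mul_crossCorrelation hf hg hfc hgc (by fun_prop)]
  have hinner : ∀ t, ∫ u, (u - t - (A - a)) ^ 2 * g u
      = (t + (A - a)) ^ 2 - 2 * (t + (A - a)) * A + B := by
    intro t
    calc ∫ u, (u - t - (A - a)) ^ 2 * g u
        = ∫ u, ((t + (A - a)) ^ 2 + -2 * (t + (A - a)) * u + 1 * u ^ 2) * g u := by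
          congr 1 with u
          ring
      _ = _ := by
          rw [integral_quadratic_mul hg hgc, hg1]
          ring
  have houter : ∀ t, f t * ∫ u, (u - t - (A - a)) ^ 2 * g u
      = (((A - a) ^ 2 - 2 * (A - a) * A + B) + (2 * (A - a) - 2 * A) * t + 1 * t ^ 2)
        * f t := by
    intro t
    rw [hinner]
    ring
  simp_rw [houter]
  rw [integral_quadratic_mul hf hfc, hf1]
  ring

lemma one_le_mul_variance_add_variance_of_crossCorrelation_le {f g : ℝ → ℝ} {s : ℝ}
    (hf : Integrable f) (hg : Integrable g) (hfc : HasCompactSupport f)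
    (hgc : HasCompactSupport g) (hf0 : ∀ x, 0 ≤ f x) (hg0 : ∀ x, 0 ≤ g x)
    (hf1 : ∫ t, f t = 1) (hg1 : ∫ u, g u = 1) (hs : ∀ x, crossCorrelation f g x ≤ s) :
    1 ≤ 12 * s ^ 2 * (((∫ t, t ^ 2 * f t) - (∫ t, t * f t) ^ 2)
      + ((∫ u, u ^ 2 * g u) - (∫ u, u * g u) ^ 2)) := by
  rw [← integral_sq_sub_mul_crossCorrelation hf hg hfc hgc hf1 hg1]
  exact one_le_mul_integral_sq_sub_mul _ (crossCorrelation_nonneg hf0 hg0) hs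
    (by rw [integral_crossCorrelation hf hg hfc hgc, hf1, hg1, one_mul])
    (integrable_mul_crossCorrelation hf hg hfc hgc (by fun_prop))

lemma le_csSup_image_of_eq_zero {M : ℝ → ℝ} {K : Set ℝ} (hK : K.Nonempty)
    (hbdd : BddAbove (M '' K)) (hM0 : ∀ x, 0 ≤ M x) (hMK : ∀ x ∉ K, M x = 0) (x : ℝ) :
    M x ≤ sSup (M '' K) := by
  by_cases hx : x ∈ K
  · exact le_csSup hbdd (mem_image_of_mem M hx)
  · obtain ⟨y, hy⟩ := hK
    exact (hMK x hx).trans_le ((hM0 y).trans (le_csSup hbdd (mem_image_of_mem M hy)))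

lemma one_div_sqrt_le_of_one_le_mul_sq {c s : ℝ} (hs : 0 ≤ s) (h : 1 ≤ c * s ^ 2) :
    1 / √c ≤ s := by
  have hc : 0 < c := by
    by_contra! hc
    nlinarith [mul_nonpos_of_nonpos_of_nonneg hc (sq_nonneg s)]
  rw [div_le_iff₀ (sqrt_pos.2 hc), ← sqrt_sq hs, ← sqrt_mul (sq_nonneg s), ← sqrt_one]
  exact sqrt_le_sqrt (by linarith)

lemma one_div_sqrt_le_sSup_crossCorrelation {f g : ℝ → ℝ} {v : ℝ} (hf : Integrable f)
    (hg : Integrable g) (hf_supp : ∀ x ∉ Icc (-1 : ℝ) 1, f x = 0)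
    (hg_supp : ∀ x ∉ Icc (-1 : ℝ) 1, g x = 0) (hf0 : ∀ x, 0 ≤ f x) (hg0 : ∀ x, 0 ≤ g x)
    (hg_le : ∀ x, g x ≤ 1) (hf1 : ∫ t, f t = 1) (hg1 : ∫ u, g u = 1)
    (hv : ((∫ t, t ^ 2 * f t) - (∫ t, t * f t) ^ 2) + ((∫ u, u ^ 2 * g u) - (∫ u, u * g u) ^ 2)
      ≤ v) :
    1 / √(12 * v) ≤ sSup (crossCorrelation f g '' Icc (-2) 2) := by
  have hbdd : BddAbove (crossCorrelation f g '' Icc (-2) 2) := ⟨1, forall_mem_image.2 fun x _ =>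
    hf1 ▸ crossCorrelation_le_integral hf hf0 hg0 hg_le x⟩
  have hs := le_csSup_image_of_eq_zero (nonempty_Icc.2 (by norm_num)) hbdd
    (crossCorrelation_nonneg hf0 hg0) fun x hx => crossCorrelation_eq_zero hf_supp hg_supp hx
  have key := one_le_mul_variance_add_variance_of_crossCorrelation_le hf hg
    (.intro isCompact_Icc hf_supp) (.intro isCompact_Icc hg_supp) hf0 hg0 hf1 hg1 hs
  refine one_div_sqrt_le_of_one_le_mul_sq ((crossCorrelation_nonneg hf0 hg0 0).trans (hs 0)) ?_
  calc 1 ≤ _ := key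
    _ ≤ 12 * sSup (crossCorrelation f g '' Icc (-2) 2) ^ 2 * v := by gcongr
    _ = _ := by ring

lemma one_div_sqrt_eight_le_sSup_crossCorrelation_indicator_one_sub {f : ℝ → ℝ}
    (hf : Integrable f) (hf_supp : ∀ x ∉ Icc (-1 : ℝ) 1, f x = 0) (hf0 : ∀ x, 0 ≤ f x)
    (hf_le : ∀ x, f x ≤ 1) (hf1 : ∫ x, f x = 1) :
    1 / √8 ≤
      sSup (crossCorrelation f ((Icc (-1) 1).indicator fun x => 1 - f x) '' Icc (-2) 2) := by
  set g := (Icc (-1 : ℝ) 1).indicator fun x => 1 - f x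
  have hg1 : ∫ x, g x = 1 := by
    simpa [hf1] using
      integral_mul_indicator_one_sub (w := fun _ => 1) (by norm_num) hf hf_supp continuous_const
  have hg2 : ∫ x, x ^ 2 * g x = 2 / 3 - ∫ x, x ^ 2 * f x := by
    rw [integral_mul_indicator_one_sub (by norm_num) hf hf_supp (continuous_pow 2)]
    norm_num [integral_pow]
  have hg : Integrable g := (integrable_indicator_iff measurableSet_Icc).2
    ((integrableOn_const (by simp)).sub hf.integrableOn)
  have := one_div_sqrt_le_sSup_crossCorrelation (v := 2 / 3) hf hg hf_supp
    (fun x hx => indicator_of_notMem hx _) hf0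
    (fun x => indicator_nonneg (fun x _ => sub_nonneg.2 (hf_le x)) x)
    (fun x => indicator_apply_le' (fun _ => by linarith [hf0 x]) fun _ => zero_le_one) hf1 hg1
    (by rw [hg2]; nlinarith [sq_nonneg (∫ t, t * f t), sq_nonneg (∫ u, u * g u)])
  rwa [show (12 : ℝ) * (2 / 3) = 8 by norm_num] at this

theorem moser_bound_general (f g M : ℝ → ℝ)
    (hf01 : ∀ x ∈ Icc (-1:ℝ) 1, 0 ≤ f x ∧ f x ≤ 1)
    (hf_supp : ∀ x, x ∉ Icc (-1:ℝ) 1 → f x = 0)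
    (hf_int : ∫ x in (-1:ℝ)..1, f x = 1)
    (hg : ∀ x, g x = if x ∈ Icc (-1:ℝ) 1 then 1 - f x else 0)
    (hM : ∀ x, M x = ∫ t in (-1:ℝ)..1, f t * g (x + t)) :
    sSup (M '' Icc (-2:ℝ) 2) ≥ 1 / Real.sqrt 8 := by
  have hf1 : ∫ x, f x = 1 := by
    rwa [← intervalIntegral_eq_integral_of_forall_notMem_Icc (by norm_num) hf_supp]
  have hf_bounds : ∀ x, 0 ≤ f x ∧ f x ≤ 1 := fun x => by
    by_cases hx : x ∈ Icc (-1 : ℝ) 1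
    · exact hf01 x hx
    · simp [hf_supp x hx]
  obtain rfl : g = (Icc (-1) 1).indicator fun x => 1 - f x := funext fun x => by
    simp [hg, indicator_apply]
  obtain rfl : M = crossCorrelation f _ := funext fun x => (hM x).trans
    (intervalIntegral_eq_integral_of_forall_notMem_Icc (by norm_num) fun t ht => by
      simp [hf_supp t ht])
  exact one_div_sqrt_eight_le_sSup_crossCorrelation_indicator_one_sub
    (.of_integral_ne_zero (by simp [hf1])) hf_supp (fun x => (hf_bounds x).1)
    (fun x => (hf_bounds x).2) hf1

theorem moser_bound (f g M : ℝ → ℝ)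
    (hf_meas : Measurable f)
    (hf01 : ∀ x ∈ Icc (-1:ℝ) 1, 0 ≤ f x ∧ f x ≤ 1)
    (hf_supp : ∀ x, x ∉ Icc (-1:ℝ) 1 → f x = 0)
    (hf_int : ∫ x in (-1:ℝ)..1, f x = 1)
    (hg : ∀ x, g x = if x ∈ Icc (-1:ℝ) 1 then 1 - f x else 0)
    (hM : ∀ x, M x = ∫ t in (-1:ℝ)..1, f t * g (x + t)) :
    sSup (M '' Icc (-2:ℝ) 2) ≥ 1 / Real.sqrt 8 :=
  moser_bound_general f g M hf01 hf_supp hf_int hg hM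
end

section
/- Let T be a positive integer. For every integer m with 1 ≤ m < 2T, |(4/π) Σ_{k=T+1}^{∞} (k(-1)^k sin(πm/2)/(m² − 4k²)) d_k| ≤ (1/(4 − m²/T²)) · (4/(π√(2T))). -/
/-!
For `k > T` the coefficient of `d k` is at most `C / k` in absolute value, where
`C = 1 / (4 - m² / T²)`, and `∑_{k > T} 1 / k² ≤ 1 / T` by telescoping. Since `1/√2`, `sin (π x)`,
`sin (2π x)`, … are orthonormal in `L²(-1, 1)` and `∫ f = 1`, Bessel's inequality gives
`1/2 + ∑ d_k² ≤ ∫ f² ≤ ∫ f = 1`. Cauchy–Schwarz combines the two bounds.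
-/

open Real MeasureTheory Set

theorem abs_tsum_mul_le_of_sum_sq_le {ι : Type*} {a b : ι → ℝ} {A B : ℝ} (hA : 0 ≤ A) (hB : 0 ≤ B)
    (ha : ∀ t : Finset ι, ∑ i ∈ t, a i ^ 2 ≤ A ^ 2)
    (hb : ∀ t : Finset ι, ∑ i ∈ t, b i ^ 2 ≤ B ^ 2) :
    |∑' i, a i * b i| ≤ A * B := by
  have hpartial (t : Finset ι) : ∑ i ∈ t, |a i * b i| ≤ A * B :=
    calc ∑ i ∈ t, |a i * b i| = ∑ i ∈ t, |a i| * |b i| := by simp_rw [abs_mul]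
      _ ≤ √(∑ i ∈ t, |a i| ^ 2) * √(∑ i ∈ t, |b i| ^ 2) := Real.sum_mul_le_sqrt_mul_sqrt _ _ _
      _ ≤ √(A ^ 2) * √(B ^ 2) := by simp only [sq_abs]; gcongr; exacts [ha t, hb t]
      _ = A * B := by rw [sqrt_sq hA, sqrt_sq hB]
  have hsum : Summable fun i ↦ |a i * b i| := summable_of_sum_le (fun _ ↦ abs_nonneg _) hpartial
  exact (tsum_of_norm_bounded (f := fun i ↦ a i * b i) hsum.hasSum fun _ ↦ le_rfl).trans
    (hsum.tsum_le_of_sum_le hpartial)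

theorem sum_one_div_add_one_add_sq_le {a : ℝ} (ha : 0 < a) (t : Finset ℕ) :
    ∑ k ∈ t, 1 / (a + 1 + k) ^ 2 ≤ 1 / a := by
  obtain ⟨N, htN⟩ := t.exists_nat_subset_range
  have hterm (k : ℕ) : 1 / (a + 1 + k) ^ 2 ≤ 1 / (a + k) - 1 / (a + (k + 1 : ℕ)) := by
    have hk : 0 < a + k := by positivity
    rw [Nat.cast_succ, ← add_assoc, div_sub_div _ _ hk.ne' (by positivity),
      div_le_div_iff₀ (by positivity) (by positivity)]
    nlinarith
  calc ∑ k ∈ t, 1 / (a + 1 + k) ^ 2 ≤ ∑ k ∈ Finset.range N, 1 / (a + 1 + k) ^ 2 :=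
        Finset.sum_le_sum_of_subset_of_nonneg htN fun _ _ _ ↦ by positivity
    _ ≤ ∑ k ∈ Finset.range N, (1 / (a + k) - 1 / (a + (k + 1 : ℕ))) :=
        Finset.sum_le_sum fun k _ ↦ hterm k
    _ = 1 / a - 1 / (a + N) := by
        rw [Finset.sum_range_sub' (fun k : ℕ ↦ 1 / (a + k)) N, Nat.cast_zero, add_zero]
    _ ≤ 1 / a := by
        have : 0 < a + N := by positivity
        linarith [one_div_pos.2 this]

theorem sum_sq_le_of_abs_le_div_add_one_add {a : ℕ → ℝ} {C T : ℝ} (hT : 0 < T)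
    (ha : ∀ k : ℕ, |a k| ≤ C / (T + 1 + k)) (t : Finset ℕ) :
    ∑ k ∈ t, a k ^ 2 ≤ (C / √T) ^ 2 :=
  calc ∑ k ∈ t, a k ^ 2 ≤ ∑ k ∈ t, C ^ 2 * (1 / (T + 1 + k) ^ 2) := by
        refine Finset.sum_le_sum fun k _ ↦ ?_
        rw [← sq_abs, mul_one_div, ← div_pow]
        exact pow_le_pow_left₀ (abs_nonneg _) (ha k) 2
    _ ≤ C ^ 2 * (1 / T) := by
        rw [← Finset.mul_sum]
        exact mul_le_mul_of_nonneg_left (sum_one_div_add_one_add_sq_le hT t) (sq_nonneg C)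
    _ = (C / √T) ^ 2 := by rw [div_pow, sq_sqrt hT.le]; ring

theorem abs_mul_div_sq_sub_four_mul_sq_le {T m n c : ℝ} (hmT : |m| < 2 * T) (hTn : T ≤ n)
    (hc : |c| ≤ 1) : |n * c / (m ^ 2 - 4 * n ^ 2)| ≤ 1 / (4 - m ^ 2 / T ^ 2) / n := by
  have hT : 0 < T := by linarith [abs_nonneg m]
  have hn : 0 < n := hT.trans_le hTn
  have hm2 : m ^ 2 < 4 * T ^ 2 := by nlinarith [sq_abs m, abs_nonneg m]
  have hq : m ^ 2 / T ^ 2 < 4 := by rw [div_lt_iff₀ (by positivity)]; linarith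
  have hden : 0 < 4 * n ^ 2 - m ^ 2 := by nlinarith
  have hmn : m ^ 2 ≤ m ^ 2 / T ^ 2 * n ^ 2 := by
    calc m ^ 2 = m ^ 2 / T ^ 2 * T ^ 2 := (div_mul_cancel₀ _ (by positivity)).symm
      _ ≤ m ^ 2 / T ^ 2 * n ^ 2 := by gcongr
  calc |n * c / (m ^ 2 - 4 * n ^ 2)| = n * |c| / (4 * n ^ 2 - m ^ 2) := by
        rw [abs_div, abs_mul, abs_of_pos hn, abs_sub_comm, abs_of_pos hden]
    _ ≤ n / (4 * n ^ 2 - m ^ 2) := by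
        gcongr; exact mul_le_of_le_one_right hn.le hc
    _ ≤ 1 / (4 - m ^ 2 / T ^ 2) / n := by
        rw [div_div, div_le_div_iff₀ hden (by nlinarith)]
        nlinarith

theorem MeasureTheory.MemLp.inner_toLp_toLp {α : Type*} [MeasurableSpace α] {μ : Measure α}
    {f g : α → ℝ} (hf : MemLp f 2 μ) (hg : MemLp g 2 μ) :
    inner ℝ (hf.toLp f) (hg.toLp g) = ∫ x, f x * g x ∂μ := by
  rw [L2.inner_def]
  refine integral_congr_ae ?_
  filter_upwards [hf.coeFn_toLp, hg.coeFn_toLp] with x hfx hgx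
  rw [hfx, hgx, real_inner_eq_re_inner, RCLike.inner_apply]
  simp [mul_comm]

theorem integral_cos_intCast_mul_pi_mul {n : ℤ} (hn : n ≠ 0) :
    ∫ x in (-1:ℝ)..1, cos (n * π * x) = 0 := by
  rw [intervalIntegral.integral_comp_mul_left cos (by simp [pi_ne_zero, hn])]
  simp [sin_int_mul_pi]

theorem integral_sin_pi_mul_natCast_mul {k : ℕ} (hk : k ≠ 0) :
    ∫ x in (-1:ℝ)..1, sin (π * k * x) = 0 := by
  rw [intervalIntegral.integral_comp_mul_left sin (by simp [pi_ne_zero, hk])]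
  simp

theorem integral_sin_mul_sin {j k : ℕ} (hj : j ≠ 0) :
    ∫ x in (-1:ℝ)..1, sin (π * j * x) * sin (π * k * x) = if j = k then 1 else 0 := by
  have hprod (x : ℝ) : sin (π * j * x) * sin (π * k * x) =
      (cos (((j - k : ℤ) : ℝ) * π * x) - cos (((j + k : ℤ) : ℝ) * π * x)) / 2 := by
    push_cast
    rw [show (j - k : ℝ) * π * x = π * j * x - π * k * x by ring,
      show (j + k : ℝ) * π * x = π * j * x + π * k * x by ring, cos_sub, cos_add]
    ring
  simp_rw [hprod]
  rw [intervalIntegral.integral_div, intervalIntegral.integral_sub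
    (Continuous.intervalIntegrable (by fun_prop) _ _)
    (Continuous.intervalIntegrable (by fun_prop) _ _),
    integral_cos_intCast_mul_pi_mul (n := j + k) (by omega)]
  split_ifs with hjk
  · simp [hjk]
  · rw [integral_cos_intCast_mul_pi_mul (by omega)]
    simp

noncomputable def sineSystem (n : ℕ) (x : ℝ) : ℝ :=
  if n = 0 then (√2)⁻¹ else sin (π * n * x)

theorem integral_sineSystem_mul_sineSystem (i j : ℕ) :
    ∫ x in (-1:ℝ)..1, sineSystem i x * sineSystem j x = if i = j then 1 else 0 := by
  rcases eq_or_ne i 0 with rfl | hi <;> rcases eq_or_ne j 0 with rfl | hj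
  · norm_num [sineSystem, ← sq, sq_sqrt zero_le_two]
  · simp [sineSystem, hj, Ne.symm hj, integral_sin_pi_mul_natCast_mul hj]
  · simp [sineSystem, hi, integral_sin_pi_mul_natCast_mul hi]
  · simp only [sineSystem, if_neg hi, if_neg hj]
    exact integral_sin_mul_sin hi

theorem memLp_sineSystem (n : ℕ) : MemLp (sineSystem n) 2 (volume.restrict (Ioc (-1:ℝ) 1)) := by
  refine MemLp.of_bound ?_ 1 (ae_of_all _ fun x ↦ ?_)
  · unfold sineSystem
    split_ifs <;> fun_prop
  · unfold sineSystem
    split_ifs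
    · rw [norm_inv, norm_of_nonneg (sqrt_nonneg 2)]
      exact inv_le_one_of_one_le₀ (one_le_sqrt.2 one_le_two)
    · exact abs_sin_le_one _

theorem orthonormal_sineSystem :
    Orthonormal ℝ fun n ↦ (memLp_sineSystem n).toLp (sineSystem n) := by
  rw [orthonormal_iff_ite]
  intro i j
  rw [MemLp.inner_toLp_toLp, ← intervalIntegral.integral_of_le (by norm_num),
    integral_sineSystem_mul_sineSystem]

theorem sum_sq_integral_sineSystem_mul_le {g : ℝ → ℝ}
    (hg : MemLp g 2 (volume.restrict (Ioc (-1:ℝ) 1))) (s : Finset ℕ) :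
    ∑ n ∈ s, (∫ x in (-1:ℝ)..1, sineSystem n x * g x) ^ 2 ≤ ∫ x in (-1:ℝ)..1, g x ^ 2 := by
  have hbessel := orthonormal_sineSystem.sum_inner_products_le (s := s) (hg.toLp g)
  simp only [← real_inner_self_eq_norm_sq, MemLp.inner_toLp_toLp, norm_eq_abs, sq_abs] at hbessel
  simpa only [intervalIntegral.integral_of_le (show (-1:ℝ) ≤ 1 by norm_num), sq] using hbessel

theorem sum_sq_integral_sin_mul_le_half {f : ℝ → ℝ} (hf_meas : Measurable f)
    (hf01 : ∀ x ∈ Icc (-1:ℝ) 1, 0 ≤ f x ∧ f x ≤ 1) (hf_int : ∫ x in (-1:ℝ)..1, f x = 1)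
    {s : Finset ℕ} (hs : 0 ∉ s) :
    ∑ k ∈ s, (∫ x in (-1:ℝ)..1, sin (π * k * x) * f x) ^ 2 ≤ 1 / 2 := by
  have hf01_ae : ∀ᵐ x ∂volume.restrict (Ioc (-1:ℝ) 1), 0 ≤ f x ∧ f x ≤ 1 :=
    (ae_restrict_mem measurableSet_Ioc).mono fun x hx ↦ hf01 x (Ioc_subset_Icc_self hx)
  have hf : MemLp f 2 (volume.restrict (Ioc (-1:ℝ) 1)) :=
    MemLp.of_bound hf_meas.aestronglyMeasurable 1 <| hf01_ae.mono fun x hx ↦ by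
      rw [norm_of_nonneg hx.1]; exact hx.2
  have hsq_le : ∫ x in (-1:ℝ)..1, f x ^ 2 ≤ 1 := by
    refine le_of_le_of_eq ?_ hf_int
    simp only [intervalIntegral.integral_of_le (show (-1:ℝ) ≤ 1 by norm_num)]
    refine integral_mono_ae hf.integrable_sq (hf.integrable one_le_two) (hf01_ae.mono fun x hx ↦ ?_)
    nlinarith [hx.1, hx.2]
  have hbessel := sum_sq_integral_sineSystem_mul_le hf (insert 0 s)
  rw [Finset.sum_insert hs] at hbessel
  have hconst : (∫ x in (-1:ℝ)..1, sineSystem 0 x * f x) ^ 2 = 1 / 2 := by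
    simp [sineSystem, hf_int, inv_pow, sq_sqrt zero_le_two]
  have hsin : ∀ k ∈ s, sineSystem k = fun x ↦ sin (π * k * x) := fun k hk ↦ by
    ext x; simp [sineSystem, ne_of_mem_of_not_mem hk hs]
  rw [hconst, Finset.sum_congr rfl fun k hk ↦ by rw [hsin k hk]] at hbessel
  linarith

theorem sine_tail_bound_general (f : ℝ → ℝ)
    (hf_meas : Measurable f)
    (hf01 : ∀ x ∈ Icc (-1:ℝ) 1, 0 ≤ f x ∧ f x ≤ 1)
    (hf_int : ∫ x in (-1:ℝ)..1, f x = 1)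
    (d : ℕ → ℝ)
    (hd : ∀ k : ℕ, 1 ≤ k → d k = ∫ x in (-1:ℝ)..1, Real.sin (π * k * x) * f x)
    (T : ℕ) (m : ℕ) (hm2 : m < 2 * T) :
    |(4 / π) * ∑' k : ℕ,
        (((T + 1 + k : ℕ) : ℝ) * (-1 : ℝ)^(T + 1 + k) * Real.sin (π * m / 2) /
          ((m:ℝ)^2 - 4 * ((T + 1 + k : ℕ) : ℝ)^2)) * d (T + 1 + k)|
      ≤ (1 / (4 - (m:ℝ)^2 / (T:ℝ)^2)) * (4 / (π * Real.sqrt (2 * (T:ℝ)))) := by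
  set C := 1 / (4 - (m:ℝ) ^ 2 / (T:ℝ) ^ 2)
  have hmT : (m:ℝ) < 2 * T := by exact_mod_cast hm2
  have hT : (0:ℝ) < T := by linarith [Nat.cast_nonneg (α := ℝ) m]
  have hC : 0 < C := one_div_pos.2 <| sub_pos.2 <| (div_lt_iff₀ (by positivity)).2 <| by
    nlinarith [Nat.cast_nonneg (α := ℝ) m]
  have hcoeff (k : ℕ) : |((T + 1 + k : ℕ) : ℝ) * (-1 : ℝ) ^ (T + 1 + k) * sin (π * m / 2) /
      ((m:ℝ) ^ 2 - 4 * ((T + 1 + k : ℕ) : ℝ) ^ 2)| ≤ C / (T + 1 + k) := by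
    have h := abs_mul_div_sq_sub_four_mul_sq_le (by rwa [Nat.abs_cast]) (n := ((T + 1 + k : ℕ) : ℝ))
      (c := (-1) ^ (T + 1 + k) * sin (π * m / 2)) (by push_cast; linarith)
      (by rw [abs_mul, abs_pow, abs_neg, abs_one, one_pow, one_mul]; exact abs_sin_le_one _)
    rw [← mul_assoc] at h
    push_cast at h ⊢
    exact h
  have htail (t : Finset ℕ) : ∑ k ∈ t, d (T + 1 + k) ^ 2 ≤ (√2)⁻¹ ^ 2 := by
    rw [inv_pow, sq_sqrt zero_le_two, ← one_div,
      ← Finset.sum_image (f := fun n ↦ d n ^ 2) (g := fun k ↦ T + 1 + k)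
        (add_right_injective _).injOn]
    rw [Finset.sum_congr rfl fun n hn ↦ by
      rw [hd n (by obtain ⟨k, -, rfl⟩ := Finset.mem_image.1 hn; omega)]]
    exact sum_sq_integral_sin_mul_le_half hf_meas hf01 hf_int (by simp)
  have hbound := abs_tsum_mul_le_of_sum_sq_le (by positivity) (by positivity)
    (sum_sq_le_of_abs_le_div_add_one_add hT hcoeff) htail
  rw [abs_mul, abs_of_pos (by positivity)]
  calc 4 / π * |_| ≤ 4 / π * (C / √T * (√2)⁻¹) := by gcongr
    _ = C * (4 / (π * √(2 * T))) := by rw [sqrt_mul zero_le_two]; field_simp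

theorem sine_tail_bound (f : ℝ → ℝ)
    (hf_meas : Measurable f)
    (hf01 : ∀ x ∈ Icc (-1:ℝ) 1, 0 ≤ f x ∧ f x ≤ 1)
    (hf_supp : ∀ x, x ∉ Icc (-1:ℝ) 1 → f x = 0)
    (hf_int : ∫ x in (-1:ℝ)..1, f x = 1)
    (d : ℕ → ℝ)
    (hd : ∀ k : ℕ, 1 ≤ k → d k = ∫ x in (-1:ℝ)..1, Real.sin (π * k * x) * f x)
    (T : ℕ) (hT : 0 < T) (m : ℕ) (hm1 : 1 ≤ m) (hm2 : m < 2 * T) :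
    |(4 / π) * ∑' k : ℕ,
        (((T + 1 + k : ℕ) : ℝ) * (-1 : ℝ)^(T + 1 + k) * Real.sin (π * m / 2) /
          ((m:ℝ)^2 - 4 * ((T + 1 + k : ℕ) : ℝ)^2)) * d (T + 1 + k)|
      ≤ (1 / (4 - (m:ℝ)^2 / (T:ℝ)^2)) * (4 / (π * Real.sqrt (2 * (T:ℝ)))) :=
  sine_tail_bound_general f hf_meas hf01 hf_int d hd T m hm2
end

section
/- Let h₁ ≤ h₂ be real numbers with h₁ ≤ E(M) ≤ h₂. Then h₁ ≤ L² Σ_{j=1}^{N} (j·w_j − (j−1)·v_j) and L² Σ_{j=1}^{N} ((j−1)·w_j − j·v_j) ≤ h₂. -/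
/-!
Since `f` and `g` take values in `[0, 1]`, `M` is nonnegative, measurable and bounded, hence
integrable on every interval. On a cell `[c, d]` positivity of `M` gives
`c ∫ M ≤ ∫ x M(x) dx ≤ d ∫ M`; cutting `[-2, 2]` into the cells `[(j-1)L, jL]` and their mirror
images and summing these bounds squeezes `E(M)` between the two sums.
-/

open Real MeasureTheory Set

theorem Measurable.intervalIntegral_prod_right {μ : Measure ℝ} [SFinite μ] {F : ℝ → ℝ → ℝ}
    (hF : Measurable (Function.uncurry F)) (a b : ℝ) :
    Measurable fun x => ∫ t in a..b, F x t ∂μ := by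
  have h : ∀ s : Set ℝ, Measurable fun x => ∫ t in s, F x t ∂μ :=
    fun s => (hF.stronglyMeasurable.integral_prod_right (ν := μ.restrict s)).measurable
  exact (h _).sub (h _)

theorem Measurable.intervalIntegrable_of_norm_le {μ : Measure ℝ} [IsLocallyFiniteMeasure μ]
    {φ : ℝ → ℝ} (hφ : Measurable φ) {C : ℝ} (hC : ∀ x, ‖φ x‖ ≤ C) (a b : ℝ) :
    IntervalIntegrable φ μ a b :=
  (intervalIntegrable_const (c := C)).mono_fun hφ.aestronglyMeasurable
    (ae_of_all _ fun x => (hC x).trans (le_abs_self C))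

section Correlation

variable {f g : ℝ → ℝ} {a b : ℝ}

theorem intervalIntegral_mul_comp_add_nonneg (hab : a ≤ b) (hf : ∀ t, 0 ≤ f t)
    (hg : ∀ y, 0 ≤ g y) (x : ℝ) : 0 ≤ ∫ t in a..b, f t * g (x + t) :=
  intervalIntegral.integral_nonneg hab fun t _ => mul_nonneg (hf t) (hg (x + t))

theorem norm_intervalIntegral_mul_comp_add_le (hf : ∀ t, f t ∈ Icc (0 : ℝ) 1)
    (hg : ∀ y, g y ∈ Icc (0 : ℝ) 1) (x : ℝ) : ‖∫ t in a..b, f t * g (x + t)‖ ≤ |b - a| := by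
  simpa using intervalIntegral.norm_integral_le_of_norm_le_const (C := 1)
    (f := fun t => f t * g (x + t)) fun t _ => by
      rw [norm_mul, norm_of_nonneg (hf t).1, norm_of_nonneg (hg (x + t)).1]
      exact mul_le_one₀ (hf t).2 (hg (x + t)).1 (hg (x + t)).2

theorem intervalIntegrable_intervalIntegral_mul_comp_add (hf_meas : Measurable f)
    (hg_meas : Measurable g) (hf : ∀ t, f t ∈ Icc (0 : ℝ) 1) (hg : ∀ y, g y ∈ Icc (0 : ℝ) 1)
    (c d : ℝ) : IntervalIntegrable (fun x => ∫ t in a..b, f t * g (x + t)) volume c d :=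
  (Measurable.intervalIntegral_prod_right (F := fun x t => f t * g (x + t)) (by fun_prop) a b
    ).intervalIntegrable_of_norm_le (norm_intervalIntegral_mul_comp_add_le hf hg) c d

end Correlation

section UniformPartition

variable {F : ℝ → ℝ} {μ : Measure ℝ}

theorem sum_integral_uniform_partition (hF : ∀ a b, IntervalIntegrable F μ a b) (L : ℝ) (n : ℕ) :
    ∑ j ∈ Finset.Icc 1 n, ∫ x in ((j : ℝ) - 1) * L..(j : ℝ) * L, F x ∂μ =
      ∫ x in 0..(n : ℝ) * L, F x ∂μ := by
  induction n with
  | zero => simp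
  | succ n ih =>
    rw [Finset.sum_Icc_succ_top (by omega), ih]
    push_cast
    rw [add_sub_cancel_right, intervalIntegral.integral_add_adjacent_intervals (hF _ _) (hF _ _)]

theorem sum_integral_uniform_partition_neg (hF : ∀ a b, IntervalIntegrable F μ a b) (L : ℝ)
    (n : ℕ) :
    ∑ j ∈ Finset.Icc 1 n, ∫ x in -(j : ℝ) * L..-((j : ℝ) - 1) * L, F x ∂μ =
      ∫ x in -((n : ℝ) * L)..0, F x ∂μ := by
  have h := sum_integral_uniform_partition hF (-L) n
  simp only [mul_neg] at h
  rw [intervalIntegral.integral_symm, ← h, ← Finset.sum_neg_distrib]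
  refine Finset.sum_congr rfl fun j _ => ?_
  rw [neg_mul, neg_mul, intervalIntegral.integral_symm]

theorem integral_neg_to_self_eq_sum_uniform_partition (hF : ∀ a b, IntervalIntegrable F μ a b)
    (L : ℝ) (n : ℕ) :
    ∫ x in -((n : ℝ) * L)..(n : ℝ) * L, F x ∂μ =
      ∑ j ∈ Finset.Icc 1 n, ((∫ x in ((j : ℝ) - 1) * L..(j : ℝ) * L, F x ∂μ) +
        ∫ x in -(j : ℝ) * L..-((j : ℝ) - 1) * L, F x ∂μ) := by
  rw [Finset.sum_add_distrib, sum_integral_uniform_partition hF,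
    sum_integral_uniform_partition_neg hF, add_comm,
    intervalIntegral.integral_add_adjacent_intervals (hF _ _) (hF _ _)]

end UniformPartition

section FirstMoment

variable {M : ℝ → ℝ} {μ : Measure ℝ}

theorem integral_id_mul_mem_Icc {c d : ℝ} (hcd : c ≤ d) (hM0 : ∀ x ∈ Icc c d, 0 ≤ M x)
    (hM : IntervalIntegrable M μ c d) :
    ∫ x in c..d, x * M x ∂μ ∈ Icc (c * ∫ x in c..d, M x ∂μ) (d * ∫ x in c..d, M x ∂μ) := by
  have hxM : IntervalIntegrable (fun x => x * M x) μ c d := hM.continuousOn_mul continuousOn_id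
  rw [← intervalIntegral.integral_const_mul, ← intervalIntegral.integral_const_mul]
  exact ⟨intervalIntegral.integral_mono_on hcd (hM.const_mul c) hxM fun x hx =>
      mul_le_mul_of_nonneg_right hx.1 (hM0 x hx),
    intervalIntegral.integral_mono_on hcd hxM (hM.const_mul d) fun x hx =>
      mul_le_mul_of_nonneg_right hx.2 (hM0 x hx)⟩

theorem integral_id_mul_symmetric_cells_bounds (hM0 : ∀ x, 0 ≤ M x)
    (hM : ∀ a b, IntervalIntegrable M μ a b) {L s w v : ℝ} (hL : 0 < L)
    (hw : w = 1 / L * ∫ x in (s - 1) * L..s * L, M x ∂μ)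
    (hv : v = 1 / L * ∫ x in -s * L..-(s - 1) * L, M x ∂μ) :
    L ^ 2 * ((s - 1) * w - s * v) ≤
        (∫ x in (s - 1) * L..s * L, x * M x ∂μ) + ∫ x in -s * L..-(s - 1) * L, x * M x ∂μ ∧
      (∫ x in (s - 1) * L..s * L, x * M x ∂μ) + ∫ x in -s * L..-(s - 1) * L, x * M x ∂μ ≤
        L ^ 2 * (s * w - (s - 1) * v) := by
  obtain ⟨hA₁, hA₂⟩ := integral_id_mul_mem_Icc (c := (s - 1) * L) (d := s * L)
    (by linarith) (fun x _ => hM0 x) (hM _ _)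
  obtain ⟨hB₁, hB₂⟩ := integral_id_mul_mem_Icc (c := -s * L) (d := -(s - 1) * L)
    (by linarith) (fun x _ => hM0 x) (hM _ _)
  rw [show ∫ x in (s - 1) * L..s * L, M x ∂μ = L * w by rw [hw]; field_simp] at hA₁ hA₂
  rw [show ∫ x in -s * L..-(s - 1) * L, M x ∂μ = L * v by rw [hv]; field_simp] at hB₁ hB₂
  constructor <;> linarith

end FirstMoment

theorem mean_interval_bounds_general (f g M : ℝ → ℝ)
    (hf_meas : Measurable f)
    (hf01 : ∀ x ∈ Icc (-1:ℝ) 1, 0 ≤ f x ∧ f x ≤ 1)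
    (hf_supp : ∀ x, x ∉ Icc (-1:ℝ) 1 → f x = 0)
    (hg : ∀ x, g x = if x ∈ Icc (-1:ℝ) 1 then 1 - f x else 0)
    (hM : ∀ x, M x = ∫ t in (-1:ℝ)..1, f t * g (x + t))
    (EM : ℝ) (hEM : EM = ∫ x in (-2:ℝ)..2, x * M x)
    (N : ℕ) (hN : 0 < N) (L : ℝ) (hL : L = 2 / (N : ℝ))
    (w v : ℕ → ℝ)
    (hw : ∀ j : ℕ, 1 ≤ j → j ≤ N →
      w j = (1/L) * ∫ x in (((j:ℝ) - 1) * L)..((j:ℝ) * L), M x)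
    (hv : ∀ j : ℕ, 1 ≤ j → j ≤ N →
      v j = (1/L) * ∫ x in (-(j:ℝ) * L)..(-((j:ℝ) - 1) * L), M x)
    (h₁ h₂ : ℝ) (hEM1 : h₁ ≤ EM) (hEM2 : EM ≤ h₂) :
    h₁ ≤ L^2 * ∑ j ∈ Finset.Icc 1 N, ((j:ℝ) * w j - ((j:ℝ) - 1) * v j) ∧
    L^2 * ∑ j ∈ Finset.Icc 1 N, (((j:ℝ) - 1) * w j - (j:ℝ) * v j) ≤ h₂ := by
  have hf_unit : ∀ x, f x ∈ Icc (0:ℝ) 1 := fun x =>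
    if hx : x ∈ Icc (-1:ℝ) 1 then hf01 x hx else by simp [hf_supp x hx]
  have hg_unit : ∀ x, g x ∈ Icc (0:ℝ) 1 := fun x => by
    rw [hg x]
    split_ifs <;> simp [(hf_unit x).1, (hf_unit x).2]
  have hg_meas : Measurable g :=
    funext hg ▸ (measurable_const.sub hf_meas).ite measurableSet_Icc measurable_const
  have hM0 : ∀ x, 0 ≤ M x := fun x => (hM x).symm ▸
    intervalIntegral_mul_comp_add_nonneg (by norm_num) (fun t => (hf_unit t).1)
      (fun y => (hg_unit y).1) x
  have hM_int : ∀ a b, IntervalIntegrable M volume a b := (funext hM).symm ▸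
    intervalIntegrable_intervalIntegral_mul_comp_add hf_meas hg_meas hf_unit hg_unit
  have hL0 : 0 < L := by rw [hL]; positivity
  have hEM_sum := integral_neg_to_self_eq_sum_uniform_partition (F := fun x => x * M x)
    (fun a b => (hM_int a b).continuousOn_mul continuousOn_id) L N
  rw [show (N : ℝ) * L = 2 by rw [hL]; field_simp, ← hEM] at hEM_sum
  have hcell (j : ℕ) (hj : j ∈ Finset.Icc 1 N) :=
    have ⟨hj1, hjN⟩ := Finset.mem_Icc.1 hj
    integral_id_mul_symmetric_cells_bounds hM0 hM_int hL0 (hw j hj1 hjN) (hv j hj1 hjN)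
  rw [Finset.mul_sum, Finset.mul_sum]
  exact ⟨hEM1.trans (hEM_sum ▸ Finset.sum_le_sum fun j hj => (hcell j hj).2),
    (Finset.sum_le_sum fun j hj => (hcell j hj).1).trans (hEM_sum ▸ hEM2)⟩

theorem mean_interval_bounds (f g M : ℝ → ℝ)
    (hf_meas : Measurable f)
    (hf01 : ∀ x ∈ Icc (-1:ℝ) 1, 0 ≤ f x ∧ f x ≤ 1)
    (hf_supp : ∀ x, x ∉ Icc (-1:ℝ) 1 → f x = 0)
    (hf_int : ∫ x in (-1:ℝ)..1, f x = 1)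
    (hg : ∀ x, g x = if x ∈ Icc (-1:ℝ) 1 then 1 - f x else 0)
    (hM : ∀ x, M x = ∫ t in (-1:ℝ)..1, f t * g (x + t))
    (EM : ℝ) (hEM : EM = ∫ x in (-2:ℝ)..2, x * M x)
    (N : ℕ) (hN : 0 < N) (L : ℝ) (hL : L = 2 / (N : ℝ))
    (w v : ℕ → ℝ)
    (hw : ∀ j : ℕ, 1 ≤ j → j ≤ N →
      w j = (1/L) * ∫ x in (((j:ℝ) - 1) * L)..((j:ℝ) * L), M x)
    (hv : ∀ j : ℕ, 1 ≤ j → j ≤ N →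
      v j = (1/L) * ∫ x in (-(j:ℝ) * L)..(-((j:ℝ) - 1) * L), M x)
    (h₁ h₂ : ℝ) (hh : h₁ ≤ h₂) (hEM1 : h₁ ≤ EM) (hEM2 : EM ≤ h₂) :
    h₁ ≤ L^2 * ∑ j ∈ Finset.Icc 1 N, ((j:ℝ) * w j - ((j:ℝ) - 1) * v j) ∧
    L^2 * ∑ j ∈ Finset.Icc 1 N, (((j:ℝ) - 1) * w j - (j:ℝ) * v j) ≤ h₂ :=
  mean_interval_bounds_general f g M hf_meas hf01 hf_supp hg hM EM hEM N hN L hL w v hw hv h₁ h₂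
    hEM1 hEM2
end
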